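/- Let M be an invertible m×m matrix over F₂ and let G = T₂ ⊗ M, a 2m×2m matrix (in block form G = ((M,0),(M,M))). Then for every K with 1 ≤ K ≤ 2m, S_G(K) = max over all pairs (a,b) of nonnegative integers with a + b = K, a ≤ m, b ≤ m, of φ(a,b), where φ(a,0) = S_M(a), φ(0,b) = 2·S_M(b), and φ(a,b) = min(S_M(a), 2·S_M(b)) when a ≥ 1 and b ≥ 1. -/

import Mathlib

open Matrix

noncomputable section

abbrev F2 : Type := ZMod 2

/-- The Arikan kernel `T₂ = ((1,0),(1,1))` over `F₂`. -/
def T2 : Matrix (Fin 2) (Fin 2) F2 := !![1, 0; 1, 1]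

/-- Kronecker product of `Fin`-indexed square matrices, with the standard index
convention `(A ⊗ B) i j = A (i / n) (j / n) * B (i % n) (j % n)`. -/
def kron {m n : ℕ} (A : Matrix (Fin m) (Fin m) F2) (B : Matrix (Fin n) (Fin n) F2) :
    Matrix (Fin (m * n)) (Fin (m * n)) F2 :=
  fun i j => A i.divNat j.divNat * B i.modNat j.modNat

/-- The `n`-fold Kronecker power of `T₂` (with `T₂^{⊗0}` the 1×1 identity). -/
def T2pow : (n : ℕ) → Matrix (Fin (2 ^ n)) (Fin (2 ^ n)) F2
  | 0 => 1
  | n + 1 => (kron T2 (T2pow n)).submatrix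
      (Fin.cast (by rw [pow_succ, Nat.mul_comm]))
      (Fin.cast (by rw [pow_succ, Nat.mul_comm]))

/-- Minimum distance `d_G(I)`: the minimum Hamming weight of `u · G` over all
nonzero row vectors `u` with support contained in `I`. -/
def minDist {N : ℕ} (G : Matrix (Fin N) (Fin N) F2) (I : Finset (Fin N)) : ℕ :=
  sInf {w | ∃ u : Fin N → F2, u ≠ 0 ∧ (∀ i, u i ≠ 0 → i ∈ I) ∧
    hammingNorm (Matrix.vecMul u G) = w}

/-- Minimum-distance spectrum `S_G(K)`: the maximum of `d_G(I)` over all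
row-index sets `I` of size `K`. -/
def spec {N : ℕ} (G : Matrix (Fin N) (Fin N) F2) (K : ℕ) : ℕ :=
  sSup {d | ∃ I : Finset (Fin N), I.card = K ∧ minDist G I = d}

/-- `K`-th largest element (1-indexed, counted with multiplicity) of a
multiset of natural numbers. -/
def kthLargest (s : Multiset ℕ) (K : ℕ) : ℕ :=
  ((s.sort (· ≤ ·)).reverse).getD (K - 1) 0

/-- The quantity φ(a,b) from the max–min recursion:
`φ(a,0) = S(a)`, `φ(0,b) = 2·S(b)`, and `φ(a,b) = min(S(a), 2·S(b))` for `a,b ≥ 1`. -/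
def phi (S : ℕ → ℕ) (a b : ℕ) : ℕ :=
  if a = 0 then 2 * S b else if b = 0 then S a else min (S a) (2 * S b)

/-
Write a row vector of length `2m` as blocks `(u₀, u₁)`. Since `u · (T₂ ⊗ M) = ((u₀ + u₁) M, u₁ M)`,
its weight is `wt((u₀ + u₁) M) + wt(u₁ M)`, which is `2 wt(u₁ M)` if `u₀ = 0` and at least
`wt(u₀ M)` otherwise (triangle inequality). Let `I` meet the two blocks in `I₀, I₁` of sizes `a, b`.
The vectors `(v, 0)` and `(0, v)` give `d(I) ≤ d_M(I₀) ≤ S_M(a)` and `d(I) ≤ 2 d_M(I₁) ≤ 2 S_M(b)`,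
whence `d(I) ≤ φ(a, b)`; conversely, if `I₀, I₁` are optimal for `M`, the two weight bounds give
`d(I) ≥ φ(a, b)`.
-/

open Finset

section Blocks

variable {k m : ℕ}

theorem finProdFinEquiv_apply_eq_mkDivMod (x : Fin k × Fin m) :
    finProdFinEquiv x = Fin.mkDivMod x.1 x.2 :=
  Fin.ext (by simp [add_comm])

theorem Fin.sum_univ_mul {β : Type*} [AddCommMonoid β] (f : Fin (k * m) → β) :
    ∑ x, f x = ∑ p, ∑ i, f (Fin.mkDivMod p i) := by
  rw [← finProdFinEquiv.sum_comp, Fintype.sum_prod_type]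
  simp only [finProdFinEquiv_apply_eq_mkDivMod]

theorem Fin.card_filter_univ_mul (P : Fin (k * m) → Prop) [DecidablePred P] :
    #{x | P x} = ∑ p, #{i | P (Fin.mkDivMod p i)} := by
  simp only [card_filter]
  exact Fin.sum_univ_mul _

-- Block `p` holds the coordinates `m * p + i`, matching the `divNat`/`modNat` convention of `kron`.
def vecBlock {α : Type*} (v : Fin (k * m) → α) (p : Fin k) : Fin m → α :=
  fun i => v (Fin.mkDivMod p i)

def vecOfBlocks {α : Type*} (w : Fin k → Fin m → α) : Fin (k * m) → α :=
  fun x => w x.divNat x.modNat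

@[simp]
theorem vecBlock_vecOfBlocks {α : Type*} (w : Fin k → Fin m → α) (p : Fin k) :
    vecBlock (vecOfBlocks w) p = w p := by
  ext i
  simp [vecBlock, vecOfBlocks]

theorem vecOfBlocks_ne_zero {α : Type*} [Zero α] {w : Fin k → Fin m → α} (hw : w ≠ 0) :
    vecOfBlocks w ≠ 0 := by
  refine fun h => hw (funext₂ fun p i => ?_)
  simpa [vecOfBlocks] using congrFun h (Fin.mkDivMod p i)

theorem eq_zero_of_forall_vecBlock_eq_zero {α : Type*} [Zero α] {v : Fin (k * m) → α}
    (h : ∀ p, vecBlock v p = 0) : v = 0 := by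
  ext x
  simpa [vecBlock] using congrFun (h x.divNat) x.modNat

theorem hammingNorm_eq_sum_vecBlock {α : Type*} [Zero α] [DecidableEq α]
    (v : Fin (k * m) → α) :
    hammingNorm v = ∑ p, hammingNorm (vecBlock v p) :=
  Fin.card_filter_univ_mul _

def finsetBlock (I : Finset (Fin (k * m))) (p : Fin k) : Finset (Fin m) :=
  {i | Fin.mkDivMod p i ∈ I}

def finsetOfBlocks (J : Fin k → Finset (Fin m)) : Finset (Fin (k * m)) :=
  {x | x.modNat ∈ J x.divNat}

@[simp]
theorem mem_finsetBlock {I : Finset (Fin (k * m))} {p : Fin k} {i : Fin m} :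
    i ∈ finsetBlock I p ↔ Fin.mkDivMod p i ∈ I := by
  simp [finsetBlock]

@[simp]
theorem finsetBlock_finsetOfBlocks (J : Fin k → Finset (Fin m)) (p : Fin k) :
    finsetBlock (finsetOfBlocks J) p = J p := by
  ext i
  simp [finsetOfBlocks]

theorem vecOfBlocks_mem_of_ne_zero {α : Type*} [Zero α] {w : Fin k → Fin m → α}
    {I : Finset (Fin (k * m))} (hw : ∀ p i, w p i ≠ 0 → i ∈ finsetBlock I p) :
    ∀ x, vecOfBlocks w x ≠ 0 → x ∈ I :=
  fun x hx => by simpa using hw _ _ hx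

theorem vecBlock_mem_of_ne_zero {α : Type*} [Zero α] {v : Fin (k * m) → α}
    {I : Finset (Fin (k * m))} (hv : ∀ x, v x ≠ 0 → x ∈ I) (p : Fin k) :
    ∀ i, vecBlock v p i ≠ 0 → i ∈ finsetBlock I p :=
  fun _ hi => mem_finsetBlock.2 (hv _ hi)

theorem card_eq_sum_card_finsetBlock (I : Finset (Fin (k * m))) :
    #I = ∑ p, #(finsetBlock I p) := by
  conv_lhs => rw [← filter_univ_mem I, Fin.card_filter_univ_mul]
  rfl

end Blocks

section MinDist

variable {N : ℕ} (G : Matrix (Fin N) (Fin N) F2)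

theorem minDist_le_hammingNorm_vecMul {I : Finset (Fin N)} {u : Fin N → F2} (hu : u ≠ 0)
    (hsupp : ∀ i, u i ≠ 0 → i ∈ I) :
    minDist G I ≤ hammingNorm (u ᵥ* G) :=
  Nat.sInf_le ⟨u, hu, hsupp, rfl⟩

theorem minDist_set_nonempty {I : Finset (Fin N)} (hI : I.Nonempty) :
    {w | ∃ u : Fin N → F2, u ≠ 0 ∧ (∀ i, u i ≠ 0 → i ∈ I) ∧
      hammingNorm (u ᵥ* G) = w}.Nonempty := by
  obtain ⟨i, hi⟩ := hI
  refine ⟨_, Pi.single i 1, by simp, fun j hj => ?_, rfl⟩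
  obtain rfl : j = i := by simpa [Pi.single_apply] using hj
  exact hi

theorem exists_hammingNorm_vecMul_eq_minDist {I : Finset (Fin N)} (hI : I.Nonempty) :
    ∃ u : Fin N → F2, u ≠ 0 ∧ (∀ i, u i ≠ 0 → i ∈ I) ∧ hammingNorm (u ᵥ* G) = minDist G I :=
  Nat.sInf_mem (minDist_set_nonempty G hI)

theorem le_minDist {I : Finset (Fin N)} (hI : I.Nonempty) {t : ℕ}
    (h : ∀ u : Fin N → F2, u ≠ 0 → (∀ i, u i ≠ 0 → i ∈ I) → t ≤ hammingNorm (u ᵥ* G)) :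
    t ≤ minDist G I :=
  le_csInf (minDist_set_nonempty G hI) fun _ ⟨u, hu, hsupp, hw⟩ => hw ▸ h u hu hsupp

theorem minDist_le_dim (I : Finset (Fin N)) : minDist G I ≤ N := by
  rcases I.eq_empty_or_nonempty with rfl | hI
  · refine (Nat.sInf_eq_zero.2 (Or.inr ?_)).trans_le N.zero_le
    refine Set.eq_empty_of_forall_notMem fun _ ⟨u, hu, hsupp, _⟩ => hu ?_
    exact funext fun i => not_not.1 fun hi => notMem_empty i (hsupp i hi)
  · obtain ⟨u, -, -, hw⟩ := exists_hammingNorm_vecMul_eq_minDist G hI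
    exact hw ▸ hammingNorm_le_card_fintype.trans_eq (Fintype.card_fin N)

theorem bddAbove_minDist_of_card_eq (K : ℕ) :
    BddAbove {d | ∃ I : Finset (Fin N), #I = K ∧ minDist G I = d} :=
  ⟨N, fun _ ⟨I, _, hd⟩ => hd ▸ minDist_le_dim G I⟩

theorem minDist_le_spec {I : Finset (Fin N)} {K : ℕ} (hI : #I = K) : minDist G I ≤ spec G K :=
  le_csSup (bddAbove_minDist_of_card_eq G K) ⟨I, hI, rfl⟩

theorem exists_minDist_eq_spec {K : ℕ} (hK : K ≤ N) :
    ∃ I : Finset (Fin N), #I = K ∧ minDist G I = spec G K := by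
  obtain ⟨I, -, hI⟩ := exists_subset_card_eq (s := (univ : Finset (Fin N)))
    (by simpa using hK)
  exact Nat.sSup_mem (s := {d | ∃ I : Finset (Fin N), #I = K ∧ minDist G I = d})
    ⟨_, I, hI, rfl⟩ (bddAbove_minDist_of_card_eq G K)

end MinDist

theorem hammingNorm_sub_le {ι β : Type*} [Fintype ι] [AddGroup β] [DecidableEq β]
    (x y : ι → β) :
    hammingNorm (x - y) ≤ hammingNorm x + hammingNorm y := by
  have hdist : hammingNorm (x - y) = hammingDist x y := by
    simp only [hammingNorm, hammingDist, Pi.sub_apply, sub_ne_zero]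
  rw [hdist, ← hammingDist_zero_right, ← hammingDist_zero_left]
  exact hammingDist_triangle x 0 y

theorem phi_le_left (S : ℕ → ℕ) {a b : ℕ} (ha : a ≠ 0) : phi S a b ≤ S a := by
  unfold phi
  split_ifs <;> omega

theorem phi_le_right (S : ℕ → ℕ) {a b : ℕ} (hb : b ≠ 0) : phi S a b ≤ 2 * S b := by
  unfold phi
  split_ifs <;> omega

theorem le_phi (S : ℕ → ℕ) {a b x : ℕ} (hab : a ≠ 0 ∨ b ≠ 0) (ha : a ≠ 0 → x ≤ S a)
    (hb : b ≠ 0 → x ≤ 2 * S b) : x ≤ phi S a b := by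
  unfold phi
  split_ifs <;> omega

theorem vecMul_kron_mkDivMod {k m : ℕ} (A : Matrix (Fin k) (Fin k) F2)
    (B : Matrix (Fin m) (Fin m) F2) (u : Fin (k * m) → F2) (q : Fin k) (j : Fin m) :
    (u ᵥ* kron A B) (Fin.mkDivMod q j) = ∑ p, A p q * (vecBlock u p ᵥ* B) j := by
  simp only [vecMul, dotProduct, kron, Fin.sum_univ_mul, Fin.divNat_mkDivMod,
    Fin.modNat_mkDivMod, vecBlock, mul_sum]
  exact sum_congr rfl fun _ _ => sum_congr rfl fun _ _ => by ring

section KronT2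

variable {m : ℕ} (M : Matrix (Fin m) (Fin m) F2)

theorem vecBlock_vecMul_kron_T2_zero (u : Fin (2 * m) → F2) :
    vecBlock (u ᵥ* kron T2 M) 0 = (vecBlock u 0 + vecBlock u 1) ᵥ* M := by
  ext j
  simp [vecBlock, vecMul_kron_mkDivMod, T2, add_vecMul]

theorem vecBlock_vecMul_kron_T2_one (u : Fin (2 * m) → F2) :
    vecBlock (u ᵥ* kron T2 M) 1 = vecBlock u 1 ᵥ* M := by
  ext j
  simp [vecBlock, vecMul_kron_mkDivMod, T2]

theorem hammingNorm_vecMul_kron_T2 (u : Fin (2 * m) → F2) :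
    hammingNorm (u ᵥ* kron T2 M) =
      hammingNorm ((vecBlock u 0 + vecBlock u 1) ᵥ* M) + hammingNorm (vecBlock u 1 ᵥ* M) := by
  rw [hammingNorm_eq_sum_vecBlock, Fin.sum_univ_two, vecBlock_vecMul_kron_T2_zero,
    vecBlock_vecMul_kron_T2_one]

theorem hammingNorm_vecMul_vecBlock_zero_le (u : Fin (2 * m) → F2) :
    hammingNorm (vecBlock u 0 ᵥ* M) ≤ hammingNorm (u ᵥ* kron T2 M) := by
  rw [hammingNorm_vecMul_kron_T2]
  simpa [add_vecMul] using
    hammingNorm_sub_le ((vecBlock u 0 + vecBlock u 1) ᵥ* M) (vecBlock u 1 ᵥ* M)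

theorem minDist_kron_T2_le_minDist_block_zero {I : Finset (Fin (2 * m))}
    (hI : (finsetBlock I 0).Nonempty) :
    minDist (kron T2 M) I ≤ minDist M (finsetBlock I 0) := by
  obtain ⟨v, hv, hsupp, hw⟩ := exists_hammingNorm_vecMul_eq_minDist M hI
  have hu : vecOfBlocks ![v, 0] ≠ 0 := vecOfBlocks_ne_zero (by simpa [funext_iff] using hv)
  have hsupp' := vecOfBlocks_mem_of_ne_zero (w := ![v, 0])
    (by simpa [Fin.forall_fin_two] using hsupp)
  calc minDist (kron T2 M) I ≤ hammingNorm (vecOfBlocks ![v, 0] ᵥ* kron T2 M) :=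
        minDist_le_hammingNorm_vecMul _ hu hsupp'
    _ = minDist M (finsetBlock I 0) := by simp [hammingNorm_vecMul_kron_T2, hw]

theorem minDist_kron_T2_le_two_mul_minDist_block_one {I : Finset (Fin (2 * m))}
    (hI : (finsetBlock I 1).Nonempty) :
    minDist (kron T2 M) I ≤ 2 * minDist M (finsetBlock I 1) := by
  obtain ⟨v, hv, hsupp, hw⟩ := exists_hammingNorm_vecMul_eq_minDist M hI
  have hu : vecOfBlocks ![0, v] ≠ 0 := vecOfBlocks_ne_zero (by simpa [funext_iff] using hv)
  have hsupp' := vecOfBlocks_mem_of_ne_zero (w := ![0, v])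
    (by simpa [Fin.forall_fin_two] using hsupp)
  calc minDist (kron T2 M) I ≤ hammingNorm (vecOfBlocks ![0, v] ᵥ* kron T2 M) :=
        minDist_le_hammingNorm_vecMul _ hu hsupp'
    _ = 2 * minDist M (finsetBlock I 1) := by simp [hammingNorm_vecMul_kron_T2, hw, two_mul]

theorem minDist_kron_T2_le_phi {I : Finset (Fin (2 * m))} (hI : I.Nonempty) :
    minDist (kron T2 M) I ≤ phi (spec M) #(finsetBlock I 0) #(finsetBlock I 1) := by
  have hcard := card_eq_sum_card_finsetBlock I
  rw [Fin.sum_univ_two] at hcard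
  refine le_phi _ (by have := hI.card_pos; omega) (fun ha => ?_) (fun hb => ?_)
  · exact (minDist_kron_T2_le_minDist_block_zero M (card_ne_zero.1 ha)).trans
      (minDist_le_spec M rfl)
  · exact (minDist_kron_T2_le_two_mul_minDist_block_one M (card_ne_zero.1 hb)).trans
      (Nat.mul_le_mul_left 2 (minDist_le_spec M rfl))

theorem phi_le_spec_kron_T2 {a b : ℕ} (ha : a ≤ m) (hb : b ≤ m) (hab : a + b ≠ 0) :
    phi (spec M) a b ≤ spec (kron T2 M) (a + b) := by
  obtain ⟨I₀, rfl, hI₀⟩ := exists_minDist_eq_spec M ha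
  obtain ⟨I₁, rfl, hI₁⟩ := exists_minDist_eq_spec M hb
  set I := finsetOfBlocks ![I₀, I₁]
  have hcard : #I = #I₀ + #I₁ := by
    simp [I, card_eq_sum_card_finsetBlock (finsetOfBlocks ![I₀, I₁])]
  refine (le_minDist _ (card_pos.1 (by omega)) fun u hu hsupp => ?_).trans
    (minDist_le_spec _ hcard)
  have hsupp₀ : ∀ i, vecBlock u 0 i ≠ 0 → i ∈ I₀ := by
    simpa [I] using vecBlock_mem_of_ne_zero hsupp 0
  have hsupp₁ : ∀ i, vecBlock u 1 i ≠ 0 → i ∈ I₁ := by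
    simpa [I] using vecBlock_mem_of_ne_zero hsupp 1
  by_cases hu₀ : vecBlock u 0 = 0
  · have hu₁ : vecBlock u 1 ≠ 0 := fun hu₁ =>
      hu (eq_zero_of_forall_vecBlock_eq_zero (Fin.forall_fin_two.2 ⟨hu₀, hu₁⟩))
    obtain ⟨i, hi⟩ := Function.ne_iff.1 hu₁
    calc phi (spec M) #I₀ #I₁ ≤ 2 * minDist M I₁ :=
          hI₁ ▸ phi_le_right _ (card_ne_zero_of_mem (hsupp₁ i hi))
      _ ≤ 2 * hammingNorm (vecBlock u 1 ᵥ* M) :=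
        Nat.mul_le_mul_left 2 (minDist_le_hammingNorm_vecMul M hu₁ hsupp₁)
      _ = hammingNorm (u ᵥ* kron T2 M) := by
        rw [hammingNorm_vecMul_kron_T2, hu₀, zero_add, two_mul]
  · obtain ⟨i, hi⟩ := Function.ne_iff.1 hu₀
    calc phi (spec M) #I₀ #I₁ ≤ minDist M I₀ :=
          hI₀ ▸ phi_le_left _ (card_ne_zero_of_mem (hsupp₀ i hi))
      _ ≤ hammingNorm (vecBlock u 0 ᵥ* M) := minDist_le_hammingNorm_vecMul M hu₀ hsupp₀
      _ ≤ hammingNorm (u ᵥ* kron T2 M) := hammingNorm_vecMul_vecBlock_zero_le M u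

end KronT2

theorem spectrum_kron_T2_recursion_general
    (m : ℕ) (M : Matrix (Fin m) (Fin m) F2)
    (K : ℕ) (hK1 : 1 ≤ K) (hK2 : K ≤ 2 * m) :
    spec (kron T2 M) K =
      sSup {d | ∃ a b : ℕ, a + b = K ∧ a ≤ m ∧ b ≤ m ∧ d = phi (spec M) a b} := by
  obtain ⟨I, hIK, hI⟩ := exists_minDist_eq_spec (kron T2 M) hK2
  have hcard := card_eq_sum_card_finsetBlock I
  rw [Fin.sum_univ_two, hIK] at hcard
  have hblock (p : Fin 2) : #(finsetBlock I p) ≤ m :=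
    (card_le_univ _).trans_eq (Fintype.card_fin m)
  refine .symm (IsGreatest.csSup_eq ⟨⟨_, _, hcard.symm, hblock 0, hblock 1, ?_⟩, ?_⟩)
  · refine le_antisymm (hI ▸ minDist_kron_T2_le_phi M (card_pos.1 (by omega))) ?_
    simpa [← hcard] using phi_le_spec_kron_T2 M (hblock 0) (hblock 1) (by omega)
  · rintro _ ⟨a, b, rfl, ha, hb, rfl⟩
    exact phi_le_spec_kron_T2 M ha hb (by omega)

theorem spectrum_kron_T2_recursion
    (m : ℕ) (M : Matrix (Fin m) (Fin m) F2) (hM : IsUnit M)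
    (K : ℕ) (hK1 : 1 ≤ K) (hK2 : K ≤ 2 * m) :
    spec (kron T2 M) K =
      sSup {d | ∃ a b : ℕ, a + b = K ∧ a ≤ m ∧ b ≤ m ∧ d = phi (spec M) a b} :=
  spectrum_kron_T2_recursion_general m M K hK1 hK2
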